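/- Contiguous relation for monic big q-Jacobi polynomials in the second parameter: for n ≥ 1, P̃_n(x; α, β/q, γ; q) = P̃_n(x; α, β, γ; q) − [αβ q^{n+1} (q^n − 1)(α q^n − 1)(γ q^n − 1) / ((αβ q^{2n} − 1)(αβ q^{2n} − q))] · P̃_{n−1}(x; α, β, γ; q), as a polynomial identity in x (assuming the denominators are nonzero). -/
import Mathlib


/-- The q-Pochhammer symbol `(a; q)_m`. -/
noncomputable def qPoch (q a : ℝ) (m : ℕ) : ℝ := ∏ j ∈ Finset.range m, (1 - a * q ^ j)

/-- The monic big q-Jacobi polynomial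
`P̃_n(x; α, β, γ; q) = ((αq;q)_n (γq;q)_n / (αβq^{n+1};q)_n) ₃φ₂(q^{-n}, αβq^{n+1}, x; αq, γq; q, q)`. -/
noncomputable def bigQJacobi (q α β γ : ℝ) (n : ℕ) (x : ℝ) : ℝ :=
  (qPoch q (α * q) n * qPoch q (γ * q) n / qPoch q (α * β * q ^ (n + 1)) n) *
    ∑ m ∈ Finset.range (n + 1),
      qPoch q (q ^ (-(n : ℤ))) m * qPoch q (α * β * q ^ (n + 1)) m * qPoch q x m * q ^ m /
        (qPoch q (α * q) m * qPoch q (γ * q) m * qPoch q q m)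


lemma qPoch_succ (q a : ℝ) (m : ℕ) : qPoch q a (m+1) = qPoch q a m * (1 - a * q ^ m) :=
  Finset.prod_range_succ _ _

lemma qPoch_succ' (q a : ℝ) (m : ℕ) : qPoch q a (m+1) = (1 - a) * qPoch q (a*q) m := by
  unfold qPoch
  rw [Finset.prod_range_succ']
  simp only [pow_zero, mul_one]
  rw [mul_comm]
  congr 1
  exact Finset.prod_congr rfl (fun j _ => by ring)

lemma qPoch_step (q a : ℝ) (m : ℕ) : qPoch q a m * (1 - a * q ^ m) = (1 - a) * qPoch q (a*q) m := by
  rw [← qPoch_succ, qPoch_succ']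

lemma qPoch_ne_zero (q a : ℝ) (m : ℕ) (h : ∀ j : ℕ, a * q ^ j ≠ 1) : qPoch q a m ≠ 0 := by
  unfold qPoch
  rw [Finset.prod_ne_zero_iff]
  intro j _ hz
  exact h j (by linear_combination -hz)


/-- Contiguous relation for monic big q-Jacobi polynomials in the second parameter. -/
theorem bigQJacobi_shift_beta (q α β γ : ℝ) (n : ℕ)
    (hq : 0 < q) (hq1 : q < 1) (hn : 1 ≤ n)
    (hα : ∀ m : ℕ, α * q ^ m ≠ 1) (hγ : ∀ m : ℕ, γ * q ^ m ≠ 1)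
    (hαβ : ∀ m : ℕ, α * β * q ^ m ≠ 1) :
    ∀ x : ℝ,
      bigQJacobi q α (β / q) γ n x
        = bigQJacobi q α β γ n x
          - (α * β * q ^ (n + 1) * (q ^ n - 1) * (α * q ^ n - 1) * (γ * q ^ n - 1) /
              ((α * β * q ^ (2 * n) - 1) * (α * β * q ^ (2 * n) - q))) *
            bigQJacobi q α β γ (n - 1) x := by
  intro x
  obtain ⟨k, rfl⟩ : ∃ k, n = k + 1 := ⟨n - 1, by omega⟩
  have hq0 : q ≠ 0 := ne_of_gt hq
  unfold bigQJacobi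
  simp only [Nat.add_sub_cancel, zpow_neg, zpow_natCast]
  -- rewrite the shifted parameter
  have harg : α * (β / q) * q ^ (k + 1 + 1) = α * β * q ^ (k + 1) := by
    field_simp; ring
  rw [harg]
  -- extend the (n-1) sum by one (zero) term
  have hzero : qPoch q ((q ^ k)⁻¹) (k + 1) = 0 := by
    unfold qPoch
    apply Finset.prod_eq_zero (Finset.self_mem_range_succ k)
    rw [inv_mul_cancel₀ (pow_ne_zero k hq0)]
    ring
  have hext :
      (∑ m ∈ Finset.range (k + 1 + 1),
        qPoch q ((q ^ k)⁻¹) m * qPoch q (α * β * q ^ (k + 1)) m * qPoch q x m * q ^ m /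
          (qPoch q (α * q) m * qPoch q (γ * q) m * qPoch q q m))
      = ∑ m ∈ Finset.range (k + 1),
        qPoch q ((q ^ k)⁻¹) m * qPoch q (α * β * q ^ (k + 1)) m * qPoch q x m * q ^ m /
          (qPoch q (α * q) m * qPoch q (γ * q) m * qPoch q q m) := by
    rw [Finset.sum_range_succ, hzero, zero_mul, zero_mul, zero_mul, zero_div, add_zero]
  rw [← hext]
  rw [Finset.mul_sum, Finset.mul_sum, Finset.mul_sum, Finset.mul_sum, ← Finset.sum_sub_distrib]
  apply Finset.sum_congr rfl
  intro m _
  -- nonzero facts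
  have hu1 : q ^ (k + 1) - 1 ≠ 0 :=
    sub_ne_zero.2 (ne_of_lt (pow_lt_one₀ (le_of_lt hq) hq1 (Nat.succ_ne_zero k)))
  have h1 : 1 - α * β * q ^ (k + 1) ≠ 0 := sub_ne_zero.2 (Ne.symm (hαβ (k + 1)))
  have h2 : α * β * q ^ (2 * (k + 1)) - 1 ≠ 0 := sub_ne_zero.2 (hαβ _)
  have h2' : 1 - α * β * q ^ (k + 1) * q ^ (k + 1) ≠ 0 := by
    intro hc; exact hαβ (2 * (k + 1)) (by linear_combination -hc)
  have h3 : α * β * q ^ (2 * (k + 1)) - q ≠ 0 := by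
    intro hc
    apply hαβ (2 * k + 1)
    have h4 : α * β * q ^ (2 * k + 1) * q = 1 * q := by linear_combination hc
    exact mul_right_cancel₀ hq0 h4
  have h3' : q - α * β * q ^ (k + 1) * q ^ (k + 1) ≠ 0 := by
    intro hc; exact h3 (by linear_combination -hc)
  have hQn : qPoch q (α * β * q ^ (k + 1 + 1)) (k + 1) ≠ 0 :=
    qPoch_ne_zero _ _ _ (fun j hj => hαβ (k + 1 + 1 + j) (by linear_combination hj))
  have hDa1 : qPoch q (α * q) m ≠ 0 :=
    qPoch_ne_zero _ _ _ (fun j hj => hα (1 + j) (by linear_combination hj))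
  have hDg1 : qPoch q (γ * q) m ≠ 0 :=
    qPoch_ne_zero _ _ _ (fun j hj => hγ (1 + j) (by linear_combination hj))
  have hDq : qPoch q q m ≠ 0 := by
    apply qPoch_ne_zero
    intro j
    have : q * q ^ j < 1 := by
      calc q * q ^ j = q ^ (j + 1) := by ring
      _ < 1 := pow_lt_one₀ (le_of_lt hq) hq1 (Nat.succ_ne_zero j)
    exact ne_of_lt this
  -- the four structural identities, in solved form
  have eP' : qPoch q ((q ^ k)⁻¹) m
      = qPoch q ((q ^ (k + 1))⁻¹) m * (q ^ (k + 1) - q ^ m) / (q ^ (k + 1) - 1) := by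
    have e1 := qPoch_step q ((q ^ (k + 1))⁻¹) m
    have hinv : (q ^ (k + 1) : ℝ)⁻¹ * q = (q ^ k)⁻¹ := by
      rw [pow_succ, mul_inv, mul_assoc, inv_mul_cancel₀ hq0, mul_one]
    rw [hinv] at e1
    have h4 : q ^ (k + 1) * (q ^ (k + 1) : ℝ)⁻¹ = 1 := mul_inv_cancel₀ (pow_ne_zero _ hq0)
    rw [eq_div_iff hu1]
    linear_combination (-(q ^ (k + 1))) * e1 +
      (qPoch q ((q ^ k)⁻¹) m - qPoch q ((q ^ (k + 1))⁻¹) m * q ^ m) * h4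
  have eS : qPoch q (α * β * q ^ (k + 1 + 1)) m
      = qPoch q (α * β * q ^ (k + 1)) m * (1 - α * β * q ^ (k + 1) * q ^ m)
          / (1 - α * β * q ^ (k + 1)) := by
    have e1 := qPoch_step q (α * β * q ^ (k + 1)) m
    have harg2 : α * β * q ^ (k + 1) * q = α * β * q ^ (k + 1 + 1) := by ring
    rw [harg2] at e1
    rw [eq_div_iff h1]
    linear_combination -e1
  have eQ' : qPoch q (α * β * q ^ (k + 1)) (k + 1)
      = (1 - α * β * q ^ (k + 1)) * qPoch q (α * β * q ^ (k + 1 + 1)) (k + 1)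
          / (1 - α * β * q ^ (k + 1) * q ^ (k + 1)) := by
    have e1 := qPoch_step q (α * β * q ^ (k + 1)) (k + 1)
    have harg2 : α * β * q ^ (k + 1) * q = α * β * q ^ (k + 1 + 1) := by ring
    rw [harg2] at e1
    rw [eq_div_iff h2']
    linear_combination e1
  have eQ'' : qPoch q (α * β * q ^ (k + 1)) k
      = (1 - α * β * q ^ (k + 1)) * qPoch q (α * β * q ^ (k + 1 + 1)) (k + 1) * q
          / ((q - α * β * q ^ (k + 1) * q ^ (k + 1)) * (1 - α * β * q ^ (k + 1) * q ^ (k + 1))) := by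
    have s1 := qPoch_succ q (α * β * q ^ (k + 1)) k
    have s2 := eQ'
    rw [s1] at s2
    rw [eq_div_iff (mul_ne_zero h3' h2')]
    rw [eq_div_iff h2'] at s2
    linear_combination q * s2
  have ePa := qPoch_succ q (α * q) k
  have eGa := qPoch_succ q (γ * q) k
  rw [eQ'', eQ', eP', eS, ePa, eGa]
  field_simp
  ring
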